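/- arXiv:1404.6472 — 2 statements merged into one kernel-verified Lean document; each statement's English description precedes it below -/
import Mathlib

section
/- Let P0 > 0 and P1 ≥ P0 + 1. For every β ∈ [0,1], setting P̃1 = βP0 + 1 (which satisfies P̃1 ≤ P1) and α = 2βP0/(βP0 + P̃1 + 1), one has (1/2)log(1 + (1−β)P0/(βP0+1)) + (1/2)log(1 + P̃1/(1+(1−1/α)²βP0)) = (1/2)log(1+P0) when β > 0; hence every point on the line R0 + R1 = (1/2)log(1+P0) with R0, R1 ≥ 0 is achieved by the inner bound of Proposition 3. -/
/-!
Write `b = βP₀`. The dirty-paper coefficient `α = 2b / (b + P̃₁ + 1)` simplifies to `b / (b + 1)`,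
so the effective interference-plus-noise `1 + (1 - 1/α)² b` equals `(b + 1) / b` and
`R₁ = ½ log (1 + b)`. Meanwhile `R₀ = ½ log ((1 + P₀) / (1 + b))`, and the two logarithms telescope
to `½ log (1 + P₀)`. Since `R₀` decreases continuously from `½ log (1 + P₀)` at `β = 0` to `0` at
`β = 1`, every split of the sum rate is attained.
-/

open Set

lemma one_add_div_dirtyPaper_noise {b : ℝ} (hb : 0 < b) :
    1 + (b + 1) / (1 + (1 - 1 / (2 * b / (b + (b + 1) + 1))) ^ 2 * b) = 1 + b := by
  have hα : 2 * b / (b + (b + 1) + 1) = b / (b + 1) := by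
    rw [show b + (b + 1) + 1 = 2 * (b + 1) by ring, mul_div_mul_left _ _ two_ne_zero]
  have hnoise : 1 + (1 - 1 / (b / (b + 1))) ^ 2 * b = (b + 1) / b := by
    field_simp
    ring
  rw [hα, hnoise, div_div_eq_mul_div, mul_div_cancel_left₀ _ (by positivity)]

lemma one_add_residual_snr {β P : ℝ} (h : β * P + 1 ≠ 0) :
    1 + (1 - β) * P / (β * P + 1) = (1 + P) / (β * P + 1) := by
  field_simp
  ring

lemma dirtyPaper_rate_sum {β P : ℝ} (hP : 0 < P) (hβ : 0 < β) :
    (1/2) * Real.log (1 + (1-β)*P / (β*P + 1))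
      + (1/2) * Real.log (1 + (β*P + 1) /
          (1 + (1 - 1/(2*β*P / (β*P + (β*P + 1) + 1)))^2 * β * P))
    = (1/2) * Real.log (1 + P) := by
  have hb : 0 < β * P := mul_pos hβ hP
  have hR1 := one_add_div_dirtyPaper_noise hb
  simp only [← mul_assoc] at hR1
  rw [hR1, one_add_residual_snr (by positivity), add_comm 1 (β * P),
    Real.log_div (by positivity) (by positivity)]
  ring

lemma exists_rate0_eq {P R : ℝ} (hP : 0 < P) (hR0 : 0 ≤ R) (hR : R ≤ (1/2) * Real.log (1 + P)) :
    ∃ β ∈ Icc (0:ℝ) 1, R = (1/2) * Real.log (1 + (1-β)*P / (β*P + 1)) := by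
  have hcont : ContinuousOn (fun β => (1/2) * Real.log (1 + (1-β)*P / (β*P + 1))) (Icc 0 1) := by
    intro β hβ
    have hden : 0 < β * P + 1 := by nlinarith [hβ.1]
    have harg : 0 < 1 + (1-β)*P / (β*P + 1) := by
      have : 0 ≤ (1-β)*P / (β*P + 1) := div_nonneg (mul_nonneg (by linarith [hβ.2]) hP.le) hden.le
      linarith
    exact ContinuousAt.continuousWithinAt (by fun_prop (disch := positivity))
  obtain ⟨β, hβ, hβR⟩ := intermediate_value_Icc' zero_le_one hcont
    (show R ∈ Icc _ _ by norm_num [hR0, hR])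
  exact ⟨β, hβ, hβR.symm⟩

/-- Theorem 1 (model I, case P1 ≥ P0+1): the inner bound with power backoff
P̃1 = βP0+1 and optimized α sums to (1/2)log(1+P0), achieving every point of
the sum-rate line. -/
theorem stmt3 (P0 P1 : ℝ) (hP0 : 0 < P0) (hP1 : P0 + 1 ≤ P1) :
    (∀ β ∈ Set.Icc (0:ℝ) 1,
      β*P0 + 1 ≤ P1 ∧
      (0 < β →
        (1/2) * Real.log (1 + (1-β)*P0 / (β*P0 + 1))
          + (1/2) * Real.log (1 + (β*P0 + 1) /
              (1 + (1 - 1/(2*β*P0 / (β*P0 + (β*P0 + 1) + 1)))^2 * β * P0))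
        = (1/2) * Real.log (1 + P0))) ∧
    (∀ R0 R1 : ℝ, 0 ≤ R0 → 0 ≤ R1 → R0 + R1 = (1/2) * Real.log (1 + P0) →
      ∃ β ∈ Set.Icc (0:ℝ) 1,
        R0 = (1/2) * Real.log (1 + (1-β)*P0 / (β*P0 + 1)) ∧
        (0 < β →
          R1 = (1/2) * Real.log (1 + (β*P0 + 1) /
              (1 + (1 - 1/(2*β*P0 / (β*P0 + (β*P0 + 1) + 1)))^2 * β * P0)))) := by
  refine ⟨fun β hβ => ⟨?_, fun hβ0 => dirtyPaper_rate_sum hP0 hβ0⟩, ?_⟩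
  · nlinarith [hβ.1, hβ.2]
  · intro R0 R1 hR0 hR1 hsum
    obtain ⟨β, hβ, hR0β⟩ := exists_rate0_eq hP0 hR0 (by linarith)
    refine ⟨β, hβ, hR0β, fun hβ0 => ?_⟩
    linarith [dirtyPaper_rate_sum hP0 hβ0]
end

section
/- For P0 > 0 and 1 ≤ P1, setting β = (P1−1)/P0 (assuming 0 ≤ (P1−1)/P0 ≤ 1, i.e., P0 ≥ P1−1) in the expressions R0 = (1/2)log(1 + (1−β)P0/(βP0+1)) and R1 = (1/2)log(1 + 4βP0P1/(4βP0 + (P1+1−βP0)²)) yields R0 = (1/2)log(1 + (P0−P1+1)/P1) and R1 = (1/2)log(P1), and moreover R0 + R1 = (1/2)log(1+P0). -/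
/-- Point B in Theorem 2 (model I): substituting β = (P1−1)/P0 into the
optimized inner bound achieves the sum-rate outer bound. -/
theorem stmt4 (P0 P1 : ℝ) (hP0 : 0 < P0) (hP1 : 1 ≤ P1) (hβub : P1 - 1 ≤ P0) :
    (1/2) * Real.log (1 + (1 - (P1-1)/P0) * P0 / (((P1-1)/P0) * P0 + 1))
      = (1/2) * Real.log (1 + (P0 - P1 + 1) / P1) ∧
    (1/2) * Real.log (1 + 4*((P1-1)/P0)*P0*P1
        / (4*((P1-1)/P0)*P0 + (P1 + 1 - ((P1-1)/P0)*P0)^2))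
      = (1/2) * Real.log P1 ∧
    (1/2) * Real.log (1 + (P0 - P1 + 1) / P1) + (1/2) * Real.log P1
      = (1/2) * Real.log (1 + P0) := by
  have hP0' : P0 ≠ 0 := ne_of_gt hP0
  have hP1pos : (0:ℝ) < P1 := lt_of_lt_of_le one_pos hP1
  have hP1' : P1 ≠ 0 := ne_of_gt hP1pos
  have hc : ((P1-1)/P0) * P0 = P1 - 1 := div_mul_cancel₀ _ hP0'
  refine ⟨?_, ?_, ?_⟩
  · congr 1
    rw [hc]
    have h1 : (1 - (P1-1)/P0) * P0 = P0 - (P1 - 1) := by field_simp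
    rw [h1]
    have : P1 - 1 + 1 = P1 := by ring
    rw [this]
    ring_nf
  · have h2 : 4*((P1-1)/P0)*P0*P1 = 4*(P1-1)*P1 := by field_simp
    have h3 : 4*((P1-1)/P0)*P0 + (P1 + 1 - ((P1-1)/P0)*P0)^2 = 4*P1 := by
      field_simp; ring
    rw [h2, h3]
    have h4 : 1 + 4*(P1-1)*P1/(4*P1) = P1 := by field_simp; ring
    rw [h4]
  · have h4 : 1 + (P0 - P1 + 1)/P1 = (1+P0)/P1 := by field_simp; ring
    rw [h4, Real.log_div (by positivity) hP1']
    ring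
end
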